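/- arXiv:2311.00081 — 8 statements merged into one kernel-verified Lean document; each statement's English description precedes it below -/
import Mathlib

section
/- Let 0 < α < 1 be a real number. Then the series ∑_{j=0}^{∞} (-1)^j C(α,j) converges and its sum equals 0; moreover, every partial sum is nonnegative: ∑_{j=0}^{n} (-1)^j C(α,j) ≥ 0 for every natural number n. -/
/-!
The partial sums telescope into a product: `∑_{j ≤ n} (-1)^j C(α,j) = ∏_{i < n} (1 - α/(i+1))`.
For `α ≤ 1` every factor is nonnegative, and for `α > 0` the product is at most
`exp (-α H_n)`, which tends to `0` because the harmonic numbers `H_n` diverge. Convergence of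
the partial sums upgrades to unconditional summation since all terms after the first are
`≤ 0`.
-/

noncomputable def genBinom (α : ℝ) (j : ℕ) : ℝ :=
  (∏ i ∈ Finset.range j, (α - (i : ℝ))) / (j.factorial : ℝ)

open Finset Filter Topology

theorem tendsto_prod_range_one_sub_of_tendsto_sum {a : ℕ → ℝ} (ha : ∀ i, a i ≤ 1)
    (hsum : Tendsto (fun n => ∑ i ∈ range n, a i) atTop atTop) :
    Tendsto (fun n => ∏ i ∈ range n, (1 - a i)) atTop (𝓝 0) := by
  have hfactor : ∀ i, 0 ≤ 1 - a i := fun i => sub_nonneg.mpr (ha i)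
  have hbound (n : ℕ) : ∏ i ∈ range n, (1 - a i) ≤ Real.exp (-∑ i ∈ range n, a i) := by
    rw [← sum_neg_distrib, Real.exp_sum]
    exact prod_le_prod (fun i _ => hfactor i) fun i _ => Real.one_sub_le_exp_neg (a i)
  exact squeeze_zero (fun n => prod_nonneg fun i _ => hfactor i) hbound
    (Real.tendsto_exp_atBot.comp (tendsto_neg_atTop_atBot.comp hsum))

theorem hasSum_of_tendsto_sum_range_of_nonpos_succ {f : ℕ → ℝ} {a : ℝ}
    (hf : ∀ j, f (j + 1) ≤ 0) (h : Tendsto (fun n => ∑ j ∈ range n, f j) atTop (𝓝 a)) :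
    HasSum f a := by
  rw [← hasSum_nat_add_iff' 1]
  have hneg : HasSum (fun j => -f (j + 1)) (f 0 - a) := by
    rw [hasSum_iff_tendsto_nat_of_nonneg (fun j => neg_nonneg.mpr (hf j))]
    have hshift (n : ℕ) : ∑ j ∈ range n, -f (j + 1) = f 0 - ∑ j ∈ range (n + 1), f j := by
      rw [sum_range_succ', sum_neg_distrib]
      ring
    simp_rw [hshift]
    exact ((tendsto_add_atTop_iff_nat 1).mpr h).const_sub (f 0)
  simpa using hneg.neg

namespace genBinom

theorem zero_right (α : ℝ) : genBinom α 0 = 1 := by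
  simp [genBinom]

theorem succ_right (α : ℝ) (j : ℕ) :
    genBinom α (j + 1) = genBinom α j * (α - j) / (j + 1) := by
  simp only [genBinom, prod_range_succ, Nat.factorial_succ]
  push_cast
  field_simp

theorem neg_one_pow_mul_succ (α : ℝ) (n : ℕ) :
    (-1) ^ (n + 1) * genBinom α (n + 1) = -(α / (n + 1)) * ∏ i ∈ range n, (1 - α / (i + 1)) := by
  induction n with
  | zero => simp [succ_right, zero_right]
  | succ n ih =>
    have hstep : (-1) ^ (n + 2) * genBinom α (n + 2)
        = -((-1) ^ (n + 1) * genBinom α (n + 1)) * (α - (n + 1)) / (n + 2) := by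
      rw [succ_right]
      push_cast
      ring
    rw [hstep, ih, prod_range_succ]
    push_cast
    generalize ∏ i ∈ range n, (1 - α / ((i : ℝ) + 1)) = P
    field_simp
    ring

theorem sum_range_succ_neg_one_pow_mul (α : ℝ) (n : ℕ) :
    ∑ j ∈ range (n + 1), (-1) ^ j * genBinom α j = ∏ i ∈ range n, (1 - α / (i + 1)) := by
  induction n with
  | zero => simp [zero_right]
  | succ n ih =>
    rw [sum_range_succ, ih, neg_one_pow_mul_succ, prod_range_succ]
    ring

end genBinom

/-- Consistency of the backward-Euler CQ weights for `0 < α < 1`: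
the series `∑_{j=0}^∞ (-1)^j C(α,j)` converges with sum `0`, and all partial sums
`∑_{j=0}^{n} (-1)^j C(α,j)` are nonnegative. -/
theorem backward_euler_cq_consistency (α : ℝ) (hα : 0 < α) (hα1 : α < 1) :
    HasSum (fun j : ℕ => (-1 : ℝ) ^ j * genBinom α j) 0 ∧
      ∀ n : ℕ, 0 ≤ ∑ j ∈ Finset.range (n + 1), (-1 : ℝ) ^ j * genBinom α j := by
  have hfactor (i : ℕ) : α / (i + 1) ≤ 1 :=
    (div_le_one (by positivity)).mpr (by linarith [(i.cast_nonneg : (0 : ℝ) ≤ i)])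
  have hpartial_nonneg (n : ℕ) : 0 ≤ ∏ i ∈ range n, (1 - α / (i + 1)) :=
    prod_nonneg fun i _ => sub_nonneg.mpr (hfactor i)
  have hharmonic : Tendsto (fun n => ∑ i ∈ range n, α / (i + 1)) atTop atTop := by
    simpa only [div_eq_mul_one_div α, ← mul_sum] using
      Real.tendsto_sum_range_one_div_nat_succ_atTop.const_mul_atTop hα
  have htendsto : Tendsto (fun n => ∑ j ∈ range (n + 1), (-1 : ℝ) ^ j * genBinom α j)
      atTop (𝓝 0) := by
    simpa only [genBinom.sum_range_succ_neg_one_pow_mul] using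
      tendsto_prod_range_one_sub_of_tendsto_sum hfactor hharmonic
  refine ⟨hasSum_of_tendsto_sum_range_of_nonpos_succ (fun j => ?_)
    ((tendsto_add_atTop_iff_nat 1).mp htendsto), fun n => ?_⟩
  · rw [genBinom.neg_one_pow_mul_succ, neg_mul]
    exact neg_nonpos.mpr (mul_nonneg (by positivity) (hpartial_nonneg j))
  · rw [genBinom.sum_range_succ_neg_one_pow_mul]
    exact hpartial_nonneg n
end

section
/- Let 0 < α < 1 be a real number and let j be a natural number. Then the following finite-sum identity holds: 2^{-α} 3^{α} ∑_{k=0}^{j} C(α,k) C(α,j−k) 3^{-k} = 2^{-α} 3^{α−j} C(α,j) ∑_{k=0}^{j} [ ((−j)_k (−α)_k) / ((1−j+α)_k) ] · 3^k / k!, where (a)_k = ∏_{i=0}^{k-1}(a+i) is the Pochhammer symbol. Equivalently, the j-th BDF2 convolution quadrature weight w_j, given via the Cauchy product w_j = (-1)^j 2^{-α} 3^{α} h^{-α} ∑_{k=0}^{j} C(α,k) C(α,j−k) 3^{-k}, satisfies w_j = (-1)^j 2^{-α} 3^{α−j} C(α,j) · ₂F₁(−j, −α; 1−j+α; 3) ·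 h^{-α}, where ₂F₁(−j,−α;1−j+α;3) denotes the terminating hypergeometric sum ∑_{k=0}^{j} ((−j)_k (−α)_k/(1−j+α)_k) 3^k/k!. -/
/-- The Pochhammer symbol `(a)_k = ∏_{i=0}^{k-1} (a + i)`. -/
noncomputable def poch (a : ℝ) (k : ℕ) : ℝ :=
  ∏ i ∈ Finset.range k, (a + (i : ℝ))

/-!
Reflecting `k ↦ j - k` turns the Cauchy product into `3^{-j} ∑ C(α,k) C(α,j-k) 3^k`, and the
identity then holds term by term: `C(α,j)` times the `k`-th hypergeometric summand is
`C(α,k) C(α,j-k) 3^k`. In terms of falling factorials `α^{\underline{n}} = n! C(α,n)` this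
is `(-j)_k = (-1)^k j!/(j-k)!`, `(-α)_k = (-1)^k α^{\underline{k}}` and the splitting
`α^{\underline{j}} = α^{\underline{j-k}} (1 - j + α)_k`, which also shows that
`(1 - j + α)_k ≠ 0` when `α` is not a natural number.
-/

open Finset Polynomial

theorem poch_eq_eval_ascPochhammer (a : ℝ) (k : ℕ) : poch a k = (ascPochhammer ℝ k).eval a := by
  induction k with
  | zero => simp [poch]
  | succ k ih => rw [poch, prod_range_succ, ← poch, ih, ascPochhammer_succ_right]; simp

theorem genBinom_eq_eval_descPochhammer_div (α : ℝ) (n : ℕ) :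
    genBinom α n = (descPochhammer ℝ n).eval α / n.factorial := by
  rw [genBinom, descPochhammer_eval_eq_prod_range]

theorem poch_neg (a : ℝ) (k : ℕ) : poch (-a) k = (-1) ^ k * (descPochhammer ℝ k).eval a := by
  rw [poch_eq_eval_ascPochhammer, ascPochhammer_eval_neg_eq_descPochhammer]

theorem poch_neg_natCast (j k : ℕ) : poch (-(j : ℝ)) k = (-1) ^ k * j.descFactorial k := by
  rw [poch_neg, descPochhammer_eval_eq_descFactorial]

theorem eval_descPochhammer_sub_mul_poch (α : ℝ) {j k : ℕ} (hk : k ≤ j) :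
    (descPochhammer ℝ (j - k)).eval α * poch (1 - j + α) k = (descPochhammer ℝ j).eval α := by
  have hshift : poch (1 - j + α) k = (descPochhammer ℝ k).eval (α - (j - k : ℕ)) := by
    rw [descPochhammer_eval_eq_ascPochhammer, poch_eq_eval_ascPochhammer, Nat.cast_sub hk]
    ring_nf
  have hmul := congrArg (eval α) (descPochhammer_mul ℝ (j - k) k)
  rwa [eval_mul, eval_comp, eval_sub, eval_X, eval_natCast, Nat.sub_add_cancel hk, ← hshift] at hmul

theorem descPochhammer_eval_ne_zero {R : Type*} [CommRing R] [IsDomain R] {r : R}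
    (hr : ∀ m : ℕ, r ≠ m) (n : ℕ) : (descPochhammer R n).eval r ≠ 0 := by
  rw [descPochhammer_eval_eq_prod_range, prod_ne_zero_iff]
  exact fun m _ => sub_ne_zero.mpr (hr m)

theorem poch_one_sub_add_ne_zero {α : ℝ} (hα : ∀ m : ℕ, α ≠ m) {j k : ℕ} (hk : k ≤ j) :
    poch (1 - j + α) k ≠ 0 := fun h => by
  have hsplit := eval_descPochhammer_sub_mul_poch α hk
  rw [h, mul_zero] at hsplit
  exact descPochhammer_eval_ne_zero hα j hsplit.symm

theorem genBinom_mul_hypergeometric_term (α x : ℝ) {j k : ℕ} (hk : k ≤ j)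
    (hpoch : poch (1 - j + α) k ≠ 0) :
    genBinom α j * (poch (-(j : ℝ)) k * poch (-α) k / poch (1 - j + α) k * x ^ k / k.factorial)
      = genBinom α k * genBinom α (j - k) * x ^ k := by
  have hdesc : ((j - k).factorial : ℝ) * j.descFactorial k = j.factorial := by
    exact_mod_cast Nat.factorial_mul_descFactorial hk
  have hdesc_ne : (j.descFactorial k : ℝ) ≠ 0 := by
    exact_mod_cast (Nat.descFactorial_pos.mpr hk).ne'
  have hsign : ((-1 : ℝ) ^ k) ^ 2 = 1 := by rw [← pow_mul, pow_mul', neg_one_sq, one_pow]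
  rw [genBinom_eq_eval_descPochhammer_div, genBinom_eq_eval_descPochhammer_div,
    genBinom_eq_eval_descPochhammer_div, ← eval_descPochhammer_sub_mul_poch α hk,
    poch_neg_natCast, poch_neg, ← hdesc]
  field_simp
  rw [hsign, mul_one]

theorem sum_mul_inv_pow_eq_inv_pow_mul_sum {K : Type*} [Field K] (f : ℕ → K) {x : K}
    (hx : x ≠ 0) (j : ℕ) :
    ∑ k ∈ range (j + 1), f k * f (j - k) * (x ^ k)⁻¹
      = (x ^ j)⁻¹ * ∑ k ∈ range (j + 1), f k * f (j - k) * x ^ k := by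
  rw [mul_sum, ← sum_range_reflect]
  refine sum_congr rfl fun k hk => ?_
  have hkj : k ≤ j := Nat.lt_succ_iff.mp (mem_range.mp hk)
  rw [Nat.add_sub_cancel, Nat.sub_sub_self hkj, pow_sub₀ x hx hkj]
  field_simp

/-- Explicit hypergeometric form of the BDF2 CQ weights: the finite-sum identity
`2^{-α} 3^{α} ∑_{k=0}^{j} C(α,k) C(α,j−k) 3^{-k}
  = 2^{-α} 3^{α−j} C(α,j) ∑_{k=0}^{j} ((−j)_k (−α)_k / (1−j+α)_k) 3^k / k!`,
and the equivalent formula for the weight `w_j` (defined via the Cauchy product)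
`w_j = (-1)^j 2^{-α} 3^{α−j} C(α,j) ₂F₁(−j,−α;1−j+α;3) h^{-α}`. -/
theorem bdf2_weights_hypergeometric (α : ℝ) (hα : 0 < α) (hα1 : α < 1) (j : ℕ) :
    ((2 : ℝ) ^ (-α) * (3 : ℝ) ^ α *
        ∑ k ∈ Finset.range (j + 1), genBinom α k * genBinom α (j - k) * ((3 : ℝ) ^ k)⁻¹
      = (2 : ℝ) ^ (-α) * (3 : ℝ) ^ (α - (j : ℝ)) * genBinom α j *
        ∑ k ∈ Finset.range (j + 1),
          poch (-(j : ℝ)) k * poch (-α) k / poch (1 - (j : ℝ) + α) k * (3 : ℝ) ^ k /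
            (k.factorial : ℝ)) ∧
    ∀ h : ℝ, 0 < h →
      (-1 : ℝ) ^ j * (2 : ℝ) ^ (-α) * (3 : ℝ) ^ α * h ^ (-α) *
          ∑ k ∈ Finset.range (j + 1), genBinom α k * genBinom α (j - k) * ((3 : ℝ) ^ k)⁻¹
        = (-1 : ℝ) ^ j * (2 : ℝ) ^ (-α) * (3 : ℝ) ^ (α - (j : ℝ)) * genBinom α j *
            (∑ k ∈ Finset.range (j + 1),
              poch (-(j : ℝ)) k * poch (-α) k / poch (1 - (j : ℝ) + α) k * (3 : ℝ) ^ k /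
                (k.factorial : ℝ)) * h ^ (-α) := by
  have hα_nat : ∀ m : ℕ, α ≠ m := by
    rintro (_ | m) rfl
    · simp at hα
    · push_cast at hα1; linarith [(m.cast_nonneg : (0 : ℝ) ≤ m)]
  have hterm : ∀ k ∈ range (j + 1), genBinom α j * (poch (-(j : ℝ)) k * poch (-α) k /
      poch (1 - j + α) k * (3 : ℝ) ^ k / k.factorial) = genBinom α k * genBinom α (j - k) * 3 ^ k :=
    fun k hk =>
      have hkj : k ≤ j := Nat.lt_succ_iff.mp (mem_range.mp hk)
      genBinom_mul_hypergeometric_term α 3 hkj (poch_one_sub_add_ne_zero hα_nat hkj)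
  refine (and_iff_left_of_imp fun hsum h _ => by
    linear_combination (-1 : ℝ) ^ j * h ^ (-α) * hsum).mpr ?_
  rw [sum_mul_inv_pow_eq_inv_pow_mul_sum _ three_ne_zero, mul_assoc _ (genBinom α j),
    mul_sum _ _ (genBinom α j), sum_congr rfl hterm, Real.rpow_sub three_pos, Real.rpow_natCast]
  ring
end

section
/- Let H be a real inner product space, and let w : ℕ → ℝ be weights satisfying w_0 > 0, w_j < 0 for all j ≥ 1, and ∑_{j=0}^{n} w_j ≥ 0 for every n ≥ 0. Let (y^n)_{n≥0} be a sequence in H with y^0 = 0. Then for every n ≥ 1: (1/2) ∑_{j=0}^{n} w_{n−j} ‖y^j‖² ≤ ‖y^n‖ · ( ∑_{j=0}^{n} w_{n−j} ‖y^j‖ ) ≤ ⟨ ∑_{j=0}^{n} w_{n−j} y^j , y^n ⟩. -/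
/-!
Off the diagonal `j = n` every weight `w (n - j)` is nonpositive, so lowering the `j`-th term
(`j < n`) of a convolution while keeping the `n`-th term fixed can only raise it. For the second
inequality lower `‖y j‖ ‖y n‖` to `⟪y j, y n⟫` (Cauchy–Schwarz). For the first, write
`a n ∂(a) - ½ ∂(a²)` as the convolution of `a n a j - a j² / 2`, lower the constant `a n² / 2`
to it, and note that `∂` of a nonnegative constant is nonnegative because the partial sums of
the weights are.
-/

open RealInnerProductSpace Finset

noncomputable section

def discreteCaputo {E : Type*} [AddCommMonoid E] [Module ℝ E] (w : ℕ → ℝ) (y : ℕ → E)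
    (n : ℕ) : E :=
  ∑ j ∈ range (n + 1), w (n - j) • y j

namespace discreteCaputo

variable {w : ℕ → ℝ} {n : ℕ}

theorem mono_of_eq_of_le (hw : ∀ j, 1 ≤ j → w j ≤ 0) {f g : ℕ → ℝ} (hfg : f n = g n)
    (hgf : ∀ j < n, g j ≤ f j) : discreteCaputo w f n ≤ discreteCaputo w g n := by
  refine sum_le_sum fun j hj => ?_
  obtain hjn | rfl := Nat.lt_or_eq_of_le (Nat.lt_succ_iff.mp (mem_range.mp hj))
  · exact mul_le_mul_of_nonpos_left (hgf j hjn) (hw _ (by omega))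
  · rw [hfg]

theorem const (c : ℝ) :
    discreteCaputo w (fun _ => c) n = (∑ j ∈ range (n + 1), w j) * c := by
  simp only [discreteCaputo, smul_eq_mul, ← sum_mul, ← sum_range_reflect w (n + 1),
    add_tsub_cancel_right]

theorem half_sq_le_mul (hw : ∀ j, 1 ≤ j → w j ≤ 0) (hsum : 0 ≤ ∑ j ∈ range (n + 1), w j)
    (a : ℕ → ℝ) :
    1 / 2 * discreteCaputo w (fun j => a j ^ 2) n ≤ a n * discreteCaputo w a n := by
  have hdiff : a n * discreteCaputo w a n - 1 / 2 * discreteCaputo w (fun j => a j ^ 2) n =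
      discreteCaputo w (fun j => a n * a j - a j ^ 2 / 2) n := by
    simp only [discreteCaputo, mul_sum, ← sum_sub_distrib, smul_eq_mul]
    exact sum_congr rfl fun j _ => by ring
  have hconst : discreteCaputo w (fun _ => a n ^ 2 / 2) n ≤
      discreteCaputo w (fun j => a n * a j - a j ^ 2 / 2) n :=
    mono_of_eq_of_le hw (by ring) fun j _ => by nlinarith [sq_nonneg (a n - a j)]
  have hnonneg : 0 ≤ discreteCaputo w (fun _ => a n ^ 2 / 2) n := by
    rw [const]
    positivity
  linarith

theorem norm_mul_le_inner {H : Type*} [NormedAddCommGroup H] [InnerProductSpace ℝ H]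
    (hw : ∀ j, 1 ≤ j → w j ≤ 0) (y : ℕ → H) :
    ‖y n‖ * discreteCaputo w (fun j => ‖y j‖) n ≤ ⟪discreteCaputo w y n, y n⟫ := by
  have hnorm : ‖y n‖ * discreteCaputo w (fun j => ‖y j‖) n =
      discreteCaputo w (fun j => ‖y j‖ * ‖y n‖) n := by
    simp only [discreteCaputo, mul_sum, smul_eq_mul]
    exact sum_congr rfl fun j _ => by ring
  have hinner : ⟪discreteCaputo w y n, y n⟫ = discreteCaputo w (fun j => ⟪y j, y n⟫) n := by
    simp only [discreteCaputo, sum_inner, real_inner_smul_left, smul_eq_mul]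
  rw [hnorm, hinner]
  exact mono_of_eq_of_le hw (real_inner_self_eq_norm_mul_norm _).symm
    fun j _ => real_inner_le_norm _ _

end discreteCaputo

end

theorem cq_coercivity_general {H : Type*} [NormedAddCommGroup H] [InnerProductSpace ℝ H]
    (w : ℕ → ℝ) (hwneg : ∀ j : ℕ, 1 ≤ j → w j < 0)
    (hwsum : ∀ n : ℕ, 0 ≤ ∑ j ∈ Finset.range (n + 1), w j)
    (y : ℕ → H) (n : ℕ) :
    (1 / 2 : ℝ) * ∑ j ∈ Finset.range (n + 1), w (n - j) * ‖y j‖ ^ 2 ≤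
        ‖y n‖ * ∑ j ∈ Finset.range (n + 1), w (n - j) * ‖y j‖ ∧
      ‖y n‖ * ∑ j ∈ Finset.range (n + 1), w (n - j) * ‖y j‖ ≤
        ⟪∑ j ∈ Finset.range (n + 1), w (n - j) • y j, y n⟫ := by
  have hw : ∀ j, 1 ≤ j → w j ≤ 0 := fun j hj => (hwneg j hj).le
  exact ⟨discreteCaputo.half_sq_le_mul hw (hwsum n) fun j => ‖y j‖,
    discreteCaputo.norm_mul_le_inner hw y⟩

/-- Discrete analogue of `(1/2) ∂ᵅ ‖y‖² ≤ ‖y‖ ∂ᵅ ‖y‖ ≤ ⟨∂ᵅ y, y⟩` for admissible CQ weights: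
if `w_0 > 0`, `w_j < 0` for `j ≥ 1`, all partial sums of the weights are nonnegative, and
`y^0 = 0`, then for every `n ≥ 1`
`(1/2) ∑_{j=0}^{n} w_{n−j} ‖y^j‖² ≤ ‖y^n‖ ∑_{j=0}^{n} w_{n−j} ‖y^j‖ ≤ ⟨∑_{j=0}^{n} w_{n−j} y^j, y^n⟩`. -/
theorem cq_coercivity {H : Type*} [NormedAddCommGroup H] [InnerProductSpace ℝ H]
    (w : ℕ → ℝ) (hw0 : 0 < w 0) (hwneg : ∀ j : ℕ, 1 ≤ j → w j < 0)
    (hwsum : ∀ n : ℕ, 0 ≤ ∑ j ∈ Finset.range (n + 1), w j)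
    (y : ℕ → H) (hy0 : y 0 = 0) (n : ℕ) (hn : 1 ≤ n) :
    (1 / 2 : ℝ) * ∑ j ∈ Finset.range (n + 1), w (n - j) * ‖y j‖ ^ 2 ≤
        ‖y n‖ * ∑ j ∈ Finset.range (n + 1), w (n - j) * ‖y j‖ ∧
      ‖y n‖ * ∑ j ∈ Finset.range (n + 1), w (n - j) * ‖y j‖ ≤
        ⟪∑ j ∈ Finset.range (n + 1), w (n - j) • y j, y n⟫ :=
  cq_coercivity_general w hwneg hwsum y n
end

section
/- Let 0 < α < 1, h > 0, T > 0, and let M_0, M_1, M_2 ≥ 0. Let (y^n)_{n≥0} be a sequence of nonnegative real numbers with y^0 = 0 which satisfies, for every n ≥ 1, y^n ≤ M_0 t_n^{α−1} + M_1 h^{α} ∑_{k=0}^{n−1} (n−k)^{α−1} y^k + M_2, where t_n = n h. Then for every n ≥ 1: y^n ≤ M_0 Γ(α) t_n^{α−1} E_{α,α}(M_1 Γ(α) t_n^{α}) + M_2 E_{α}(M_1 Γ(α) t_n^{α}), where E_{α,β}(z) = ∑_{k=0}^{∞} z^k / Γ(αk + β) is the two-parameter Mittag-Leffler function and E_α :=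 E_{α,1}. -/
/-!
Iterating the inequality produces the series `∑ⱼ bⱼ(tₙ)` with `c = M₁ Γ(α)`,
`g_β(t) = t^{β-1} / Γ(β)` (`riemannLiouvilleKernel`) and
`bⱼ = cʲ (M₀ Γ(α) g_{αj+α} + M₂ g_{αj+1})` (`gronwallTerm`), whose sum is the right-hand side.
By strong induction on `n`, `yₙ` is dominated by this sum as soon as one step of the recursion
maps `bⱼ` below `bⱼ₊₁`, i.e. as soon as the discrete Riemann–Liouville sum satisfies
`h^α ∑_{k=1}^{n-1} (n-k)^{α-1} g_β(t_k) ≤ Γ(α) g_{α+β}(tₙ)`. This holds because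
`s ↦ s^{β-1} (n-s)^{α-1}` first decreases and then increases on `(0, n)`, so its values at the
integers are dominated by its integral, the Beta integral `B(β, α) n^{α+β-1}`.
-/

noncomputable def mittagLeffler (α β z : ℝ) : ℝ :=
  ∑' k : ℕ, z ^ k / Real.Gamma (α * k + β)

open Real Set Filter MeasureTheory

theorem Real.rpow_mul_Gamma_le_Gamma_add {x a : ℝ} (hx : 1 < x) (ha : 0 < a) :
    (x - 1) ^ a * Gamma x ≤ Gamma (x + a) := by
  -- Slopes of the convex `log ∘ Γ` increase, and its slope on `[x - 1, x]` is `log (x - 1)`.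
  have hx0 : 0 < x - 1 := by linarith
  have slope := convexOn_log_Gamma.slope_mono_adjacent (mem_Ioi.2 hx0)
    (mem_Ioi.2 (by linarith : 0 < x + a)) (by linarith : x - 1 < x) (by linarith : x < x + a)
  have hΓ : Gamma x = (x - 1) * Gamma (x - 1) := by
    simpa using Gamma_add_one hx0.ne'
  have hΓpos := Gamma_pos_of_pos hx0
  simp only [Function.comp, hΓ, sub_sub_cancel, div_one, add_sub_cancel_left] at slope
  rw [log_mul hx0.ne' hΓpos.ne', add_sub_cancel_right, le_div_iff₀ ha] at slope
  rw [← log_le_log_iff (by positivity) (Gamma_pos_of_pos (by linarith)), log_mul (by positivity)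
    (by positivity), log_rpow hx0, hΓ, log_mul hx0.ne' hΓpos.ne']
  linarith

theorem summable_mittagLeffler {α β : ℝ} (hα : 0 < α) (hβ : 0 < β) (z : ℝ) :
    Summable fun k : ℕ => z ^ k / Gamma (α * k + β) := by
  have hlin : Tendsto (fun k : ℕ => α * k + β - 1) atTop atTop :=
    tendsto_atTop_add_const_right _ _
      ((tendsto_natCast_atTop_atTop.const_mul_atTop hα).atTop_add tendsto_const_nhds)
  refine summable_of_ratio_norm_eventually_le (r := 1 / 2) (by norm_num) ?_
  filter_upwards [hlin.eventually_gt_atTop 0,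
    ((tendsto_rpow_atTop hα).comp hlin).eventually_ge_atTop (2 * |z|)] with k hk hk'
  have hΓ : 0 < Gamma (α * k + β) := Gamma_pos_of_pos (by positivity)
  have hΓratio := rpow_mul_Gamma_le_Gamma_add (by linarith : 1 < α * k + β) hα
  rw [Function.comp_apply] at hk'
  rw [norm_div, norm_div, norm_pow, norm_pow, Real.norm_of_nonneg hΓ.le,
    Real.norm_of_nonneg (Gamma_pos_of_pos (by positivity)).le, Real.norm_eq_abs, pow_succ,
    show α * ((k + 1 : ℕ) : ℝ) + β = α * k + β + α by push_cast; ring]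
  calc |z| ^ k * |z| / Gamma (α * k + β + α)
      ≤ |z| ^ k * |z| / ((α * k + β - 1) ^ α * Gamma (α * k + β)) := by
        gcongr
    _ ≤ 1 / 2 * (|z| ^ k / Gamma (α * k + β)) := by
        rw [div_le_iff₀ (mul_pos (rpow_pos_of_pos hk _) hΓ)]
        field_simp
        nlinarith [pow_nonneg (abs_nonneg z) k]

theorem integral_rpow_mul_sub_rpow {α γ N : ℝ} (hα : 0 < α) (hγ : 0 < γ) (hN : 0 < N) :
    ∫ s in (0 : ℝ)..N, s ^ (γ - 1) * (N - s) ^ (α - 1) =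
      Gamma γ * Gamma α / Gamma (γ + α) * N ^ (γ + α - 1) := by
  apply Complex.ofReal_injective
  have hbeta := Complex.betaIntegral_scaled γ α hN
  rw [Complex.betaIntegral_eq_Gamma_mul_div _ _ (by simpa) (by simpa)] at hbeta
  rw [← intervalIntegral.integral_ofReal]
  convert hbeta using 1
  · refine intervalIntegral.integral_congr fun s hs => ?_
    rw [uIcc_of_le hN.le] at hs
    push_cast
    rw [Complex.ofReal_cpow hs.1, Complex.ofReal_cpow (sub_nonneg.2 hs.2)]
    push_cast
    ring_nf
  · rw [Complex.ofReal_mul, Complex.ofReal_cpow hN.le]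
    push_cast
    rw [← Complex.Gamma_ofReal, ← Complex.Gamma_ofReal, ← Complex.Gamma_ofReal]
    push_cast
    ring

theorem intervalIntegrable_rpow_mul_sub_rpow {α γ N : ℝ} (hα : 0 < α) (hγ : 0 < γ) (hN : 0 < N) :
    IntervalIntegrable (fun s => s ^ (γ - 1) * (N - s) ^ (α - 1)) volume 0 N := by
  -- A function that is not interval integrable has integral `0`.
  refine intervalIntegral.intervalIntegrable_of_integral_ne_zero ?_
  rw [integral_rpow_mul_sub_rpow hα hγ hN]
  have := Gamma_pos_of_pos hα
  have := Gamma_pos_of_pos hγ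
  have := Gamma_pos_of_pos (add_pos hγ hα)
  positivity

theorem sum_Ico_le_integral_of_antitoneOn_of_monotoneOn {f : ℝ → ℝ} {n : ℕ} {s₀ : ℝ}
    (hf : IntervalIntegrable f volume 0 n) (hf₀ : ∀ x ∈ Icc (0 : ℝ) n, 0 ≤ f x)
    (hanti : AntitoneOn f (Ioc 0 s₀)) (hmono : MonotoneOn f (Ico s₀ n)) :
    ∑ k ∈ Finset.Ico 1 n, f k ≤ ∫ x in (0 : ℝ)..n, f x := by
  set g : ℕ → ℝ := fun j => ∫ x in (j : ℝ)..(j + 1 : ℕ), f x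
  -- `f (1 + i)` is at most the mean of `f` over `[a i, a i + 1]`, the unit interval on the side
  -- where `f` is larger; distinct `i` give distinct intervals.
  set a : ℕ → ℕ := fun i => if ((1 + i : ℕ) : ℝ) ≤ s₀ then i else i + 1
  have ha : StrictMono a := strictMono_nat_of_lt_succ fun i => by
    simp only [a]; split_ifs <;> push_cast at * <;> first | omega | linarith
  have hint : ∀ j < n, IntervalIntegrable f volume j (j + 1 : ℕ) := fun j hj =>
    hf.mono_set (by
      rw [uIcc_of_le (Nat.cast_nonneg n), uIcc_of_le (by simp)]
      exact Icc_subset_Icc (Nat.cast_nonneg j) (by exact_mod_cast hj))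
  have hg₀ : ∀ j < n, 0 ≤ g j := fun j hj =>
    intervalIntegral.integral_nonneg (by simp) fun x hx =>
      hf₀ x ⟨(Nat.cast_nonneg j).trans hx.1, hx.2.trans (by exact_mod_cast hj)⟩
  have hle : ∀ i ∈ Finset.range (n - 1), f (1 + i : ℕ) ≤ g (a i) := by
    intro i hi
    rw [Finset.mem_range] at hi
    have hai : a i < n := by simp only [a]; split_ifs <;> omega
    calc f (1 + i : ℕ) = ∫ _ in (a i : ℝ)..(a i + 1 : ℕ), f (1 + i : ℕ) := by simp
      _ ≤ g (a i) := by
        refine intervalIntegral.integral_mono_on_of_le_Ioo (by simp) (by simp) (hint _ hai)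
          fun x hx => ?_
        simp only [a] at hx
        split_ifs at hx with h
        · push_cast at hx h ⊢
          exact hanti ⟨by linarith [hx.1], by linarith [hx.2]⟩ ⟨by linarith, h⟩ (by linarith [hx.2])
        · push_cast at hx h ⊢
          have hn : (i : ℝ) + 2 ≤ n := by exact_mod_cast (by omega : i + 2 ≤ n)
          exact hmono ⟨by linarith, by linarith⟩ ⟨by linarith [hx.1], by linarith [hx.2]⟩
            (by linarith [hx.1])
  calc ∑ k ∈ Finset.Ico 1 n, f k = ∑ i ∈ Finset.range (n - 1), f (1 + i : ℕ) :=
        Finset.sum_Ico_eq_sum_range _ _ _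
    _ ≤ ∑ i ∈ Finset.range (n - 1), g (a i) := Finset.sum_le_sum hle
    _ = ∑ j ∈ (Finset.range (n - 1)).image a, g j :=
        (Finset.sum_image fun _ _ _ _ h => ha.injective h).symm
    _ ≤ ∑ j ∈ Finset.range n, g j := by
        refine Finset.sum_le_sum_of_subset_of_nonneg ?_ fun j hj _ => hg₀ j (Finset.mem_range.1 hj)
        intro j hj
        obtain ⟨i, hi, rfl⟩ := Finset.mem_image.1 hj
        rw [Finset.mem_range] at hi ⊢
        simp only [a]; split_ifs <;> omega
    _ = ∫ x in (0 : ℝ)..n, f x := by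
        simpa [g] using
          intervalIntegral.sum_integral_adjacent_intervals (a := fun j : ℕ => (j : ℝ)) hint

theorem hasDerivAt_rpow_mul_sub_rpow {α γ N x : ℝ} (hx : 0 < x) (hxN : x < N) :
    HasDerivAt (fun s => s ^ (γ - 1) * (N - s) ^ (α - 1))
      (x ^ (γ - 2) * (N - x) ^ (α - 2) * ((2 - α - γ) * x - (1 - γ) * N)) x := by
  have hNx : 0 < N - x := by linarith
  have h := (hasDerivAt_rpow_const (p := γ - 1) (Or.inl hx.ne')).mul
    ((hasDerivAt_rpow_const (p := α - 1) (Or.inl hNx.ne')).comp x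
      ((hasDerivAt_id x).const_sub N))
  refine h.congr_deriv ?_
  simp only [Function.comp_apply]
  rw [show γ - 1 - 1 = γ - 2 by ring, show α - 1 - 1 = α - 2 by ring,
    show γ - 1 = γ - 2 + 1 by ring, show α - 1 = α - 2 + 1 by ring,
    rpow_add_one hx.ne', rpow_add_one hNx.ne']
  ring

theorem exists_antitoneOn_monotoneOn_rpow_mul_sub_rpow {α γ N : ℝ} (hα1 : α < 1) (hN : 0 < N) :
    ∃ s₀, AntitoneOn (fun s => s ^ (γ - 1) * (N - s) ^ (α - 1)) (Ioc 0 s₀) ∧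
      MonotoneOn (fun s => s ^ (γ - 1) * (N - s) ^ (α - 1)) (Ico s₀ N) := by
  rcases le_or_gt 1 γ with hγ | hγ
  · refine ⟨0, fun x hx => absurd hx.2 (not_le.2 hx.1), fun x hx y hy hxy => ?_⟩
    exact mul_le_mul (rpow_le_rpow hx.1 hxy (by linarith))
      (rpow_le_rpow_of_nonpos (by linarith [hy.2]) (by linarith) (by linarith))
      (rpow_nonneg (by linarith [hx.2]) _) (rpow_nonneg (hx.1.trans hxy) _)
  -- The derivative changes sign once, at the zero `s₀` of its linear factor.
  have hden : 0 < 2 - α - γ := by linarith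
  set s₀ := (1 - γ) * N / (2 - α - γ)
  have hs₀ : 0 < s₀ := div_pos (by nlinarith) hden
  have hs₀N : s₀ < N := by rw [div_lt_iff₀ hden]; nlinarith
  set f' : ℝ → ℝ := fun x => x ^ (γ - 2) * (N - x) ^ (α - 2) * ((2 - α - γ) * x - (1 - γ) * N)
  have hderiv : ∀ x ∈ Ioo 0 N, HasDerivAt (fun s => s ^ (γ - 1) * (N - s) ^ (α - 1)) (f' x) x :=
    fun x hx => hasDerivAt_rpow_mul_sub_rpow hx.1 hx.2
  have hfactor : ∀ x ∈ Ioo 0 N, 0 ≤ x ^ (γ - 2) * (N - x) ^ (α - 2) := fun x hx =>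
    mul_nonneg (rpow_nonneg hx.1.le _) (rpow_nonneg (by linarith [hx.2]) _)
  refine ⟨s₀, antitoneOn_of_hasDerivWithinAt_nonpos (f' := f') (convex_Ioc 0 s₀)
    (fun x hx => (hderiv x ⟨hx.1, hx.2.trans_lt hs₀N⟩).continuousAt.continuousWithinAt)
    ?_ ?_, monotoneOn_of_hasDerivWithinAt_nonneg (f' := f') (convex_Ico s₀ N)
    (fun x hx => (hderiv x ⟨hs₀.trans_le hx.1, hx.2⟩).continuousAt.continuousWithinAt) ?_ ?_⟩
  all_goals simp only [interior_Ioc, interior_Ico]; intro x hx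
  · exact (hderiv x ⟨hx.1, hx.2.trans hs₀N⟩).hasDerivWithinAt
  · have : (2 - α - γ) * x ≤ (1 - γ) * N := by
      have := hx.2.le; rw [le_div_iff₀ hden] at this; linarith
    exact mul_nonpos_of_nonneg_of_nonpos (hfactor x ⟨hx.1, hx.2.trans hs₀N⟩) (by linarith)
  · exact (hderiv x ⟨hs₀.trans hx.1, hx.2⟩).hasDerivWithinAt
  · have : (1 - γ) * N ≤ (2 - α - γ) * x := by
      have := hx.1.le; rw [div_le_iff₀ hden] at this; linarith
    exact mul_nonneg (hfactor x ⟨hs₀.trans hx.1, hx.2⟩) (by linarith)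

theorem sum_Ico_rpow_mul_rpow_le {α γ : ℝ} (hα : 0 < α) (hα1 : α < 1) (hγ : 0 < γ) {n : ℕ}
    (hn : 0 < n) :
    ∑ k ∈ Finset.Ico 1 n, ((n - k : ℕ) : ℝ) ^ (α - 1) * (k : ℝ) ^ (γ - 1) ≤
      Gamma γ * Gamma α / Gamma (γ + α) * (n : ℝ) ^ (γ + α - 1) := by
  have hN : (0 : ℝ) < n := by exact_mod_cast hn
  obtain ⟨s₀, hanti, hmono⟩ := exists_antitoneOn_monotoneOn_rpow_mul_sub_rpow (γ := γ) hα1 hN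
  calc ∑ k ∈ Finset.Ico 1 n, ((n - k : ℕ) : ℝ) ^ (α - 1) * (k : ℝ) ^ (γ - 1)
      = ∑ k ∈ Finset.Ico 1 n, (k : ℝ) ^ (γ - 1) * ((n : ℝ) - k) ^ (α - 1) :=
        Finset.sum_congr rfl fun k hk => by
          rw [Nat.cast_sub (Finset.mem_Ico.1 hk).2.le, mul_comm]
    _ ≤ ∫ s in (0 : ℝ)..n, s ^ (γ - 1) * (n - s) ^ (α - 1) :=
        sum_Ico_le_integral_of_antitoneOn_of_monotoneOn
          (intervalIntegrable_rpow_mul_sub_rpow hα hγ hN)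
          (fun s hs => mul_nonneg (rpow_nonneg hs.1 _) (rpow_nonneg (sub_nonneg.2 hs.2) _))
          hanti hmono
    _ = _ := integral_rpow_mul_sub_rpow hα hγ hN

noncomputable def riemannLiouvilleKernel (β t : ℝ) : ℝ :=
  t ^ (β - 1) / Gamma β

theorem sum_Ico_rpow_mul_riemannLiouvilleKernel_le {α β h : ℝ} (hα : 0 < α) (hα1 : α < 1)
    (hβ : 0 < β) (hh : 0 < h) {n : ℕ} (hn : 0 < n) :
    h ^ α * ∑ k ∈ Finset.Ico 1 n, ((n - k : ℕ) : ℝ) ^ (α - 1) * riemannLiouvilleKernel β (k * h) ≤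
      Gamma α * riemannLiouvilleKernel (α + β) (n * h) := by
  have hΓβ := Gamma_pos_of_pos hβ
  calc h ^ α * ∑ k ∈ Finset.Ico 1 n, ((n - k : ℕ) : ℝ) ^ (α - 1) * riemannLiouvilleKernel β (k * h)
      = h ^ α * h ^ (β - 1) / Gamma β *
          ∑ k ∈ Finset.Ico 1 n, ((n - k : ℕ) : ℝ) ^ (α - 1) * (k : ℝ) ^ (β - 1) := by
        simp only [riemannLiouvilleKernel, Finset.mul_sum]
        refine Finset.sum_congr rfl fun k _ => ?_
        rw [mul_rpow (Nat.cast_nonneg k) hh.le]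
        ring
    _ ≤ h ^ α * h ^ (β - 1) / Gamma β *
          (Gamma β * Gamma α / Gamma (β + α) * (n : ℝ) ^ (β + α - 1)) := by
        gcongr
        exact sum_Ico_rpow_mul_rpow_le hα hα1 hβ hn
    _ = Gamma α * riemannLiouvilleKernel (α + β) (n * h) := by
        rw [riemannLiouvilleKernel, mul_rpow (Nat.cast_nonneg n) hh.le, ← rpow_add hh, add_comm β α,
          show α + (β - 1) = α + β - 1 by ring]
        field_simp

noncomputable def gronwallTerm (α M₀ M₂ c t : ℝ) (j : ℕ) : ℝ :=
  c ^ j * (M₀ * Gamma α * riemannLiouvilleKernel (α * j + α) t +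
    M₂ * riemannLiouvilleKernel (α * j + 1) t)

theorem gronwallTerm_zero {α : ℝ} (hα : 0 < α) (M₀ M₂ c t : ℝ) :
    gronwallTerm α M₀ M₂ c t 0 = M₀ * t ^ (α - 1) + M₂ := by
  simp only [gronwallTerm, riemannLiouvilleKernel, pow_zero, one_mul, CharP.cast_eq_zero,
    mul_zero, zero_add, sub_self, rpow_zero, Gamma_one, div_one]
  field_simp [(Gamma_pos_of_pos hα).ne']

theorem hasSum_gronwallTerm {α t : ℝ} (hα : 0 < α) (ht : 0 < t) (M₀ M₂ c : ℝ) :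
    HasSum (gronwallTerm α M₀ M₂ c t)
      (M₀ * Gamma α * t ^ (α - 1) * mittagLeffler α α (c * t ^ α) +
        M₂ * mittagLeffler α 1 (c * t ^ α)) := by
  have hterm : gronwallTerm α M₀ M₂ c t = fun j : ℕ =>
      M₀ * Gamma α * t ^ (α - 1) * ((c * t ^ α) ^ j / Gamma (α * j + α)) +
        M₂ * ((c * t ^ α) ^ j / Gamma (α * j + 1)) := by
    funext j
    rw [gronwallTerm, riemannLiouvilleKernel, riemannLiouvilleKernel, mul_pow,
      ← rpow_mul_natCast ht.le, show α * j + α - 1 = α - 1 + α * j by ring, add_sub_cancel_right,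
      rpow_add ht]
    ring
  rw [hterm]
  exact ((summable_mittagLeffler hα hα _).hasSum.mul_left _).add
    ((summable_mittagLeffler hα one_pos _).hasSum.mul_left _)

theorem gronwallTerm_step {α h M₀ M₁ M₂ : ℝ} (hα : 0 < α) (hα1 : α < 1) (hh : 0 < h)
    (hM₀ : 0 ≤ M₀) (hM₁ : 0 ≤ M₁) (hM₂ : 0 ≤ M₂) {n : ℕ} (hn : 0 < n) (j : ℕ) :
    M₁ * h ^ α * ∑ k ∈ Finset.Ico 1 n,
        ((n - k : ℕ) : ℝ) ^ (α - 1) * gronwallTerm α M₀ M₂ (M₁ * Gamma α) (k * h) j ≤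
      gronwallTerm α M₀ M₂ (M₁ * Gamma α) (n * h) (j + 1) := by
  have hΓ := Gamma_pos_of_pos hα
  have hc : 0 ≤ M₁ * Gamma α := mul_nonneg hM₁ hΓ.le
  have hβ₀ : 0 < α * j + α := by positivity
  have hβ₂ : 0 < α * j + 1 := by positivity
  set c := M₁ * Gamma α
  calc M₁ * h ^ α * ∑ k ∈ Finset.Ico 1 n,
        ((n - k : ℕ) : ℝ) ^ (α - 1) * gronwallTerm α M₀ M₂ c (k * h) j
      = M₁ * c ^ j * (M₀ * Gamma α * (h ^ α * ∑ k ∈ Finset.Ico 1 n, ((n - k : ℕ) : ℝ) ^ (α - 1) *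
            riemannLiouvilleKernel (α * j + α) (k * h)) +
          M₂ * (h ^ α * ∑ k ∈ Finset.Ico 1 n, ((n - k : ℕ) : ℝ) ^ (α - 1) *
            riemannLiouvilleKernel (α * j + 1) (k * h))) := by
        simp only [gronwallTerm, Finset.mul_sum, mul_add, Finset.sum_add_distrib]
        congr 1 <;> refine Finset.sum_congr rfl fun k _ => by ring
    _ ≤ M₁ * c ^ j * (M₀ * Gamma α * (Gamma α * riemannLiouvilleKernel (α + (α * j + α)) (n * h)) +
          M₂ * (Gamma α * riemannLiouvilleKernel (α + (α * j + 1)) (n * h))) := by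
        gcongr _ * (_ * ?_ + _ * ?_)
        · exact sum_Ico_rpow_mul_riemannLiouvilleKernel_le hα hα1 hβ₀ hh hn
        · exact sum_Ico_rpow_mul_riemannLiouvilleKernel_le hα hα1 hβ₂ hh hn
    _ = gronwallTerm α M₀ M₂ c (n * h) (j + 1) := by
        rw [gronwallTerm, show α + (α * j + α) = α * ((j + 1 : ℕ) : ℝ) + α by push_cast; ring,
          show α + (α * j + 1) = α * ((j + 1 : ℕ) : ℝ) + 1 by push_cast; ring, pow_succ]
        ring

theorem le_tsum_of_le_add_sum_Ico {y : ℕ → ℝ} {w b : ℕ → ℕ → ℝ} (hw : ∀ n k, 0 ≤ w n k)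
    (hb : ∀ n, 0 < n → Summable (b n))
    (hy : ∀ n, 0 < n → y n ≤ b n 0 + ∑ k ∈ Finset.Ico 1 n, w n k * y k)
    (hstep : ∀ n, 0 < n → ∀ j, ∑ k ∈ Finset.Ico 1 n, w n k * b k j ≤ b n (j + 1)) {n : ℕ}
    (hn : 0 < n) : y n ≤ ∑' j, b n j := by
  induction n using Nat.strong_induction_on with
  | _ n ih =>
    have hbk : ∀ k ∈ Finset.Ico 1 n, Summable (b k) := fun k hk => hb k (Finset.mem_Ico.1 hk).1
    calc y n ≤ b n 0 + ∑ k ∈ Finset.Ico 1 n, w n k * y k := hy n hn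
      _ ≤ b n 0 + ∑ k ∈ Finset.Ico 1 n, w n k * ∑' j, b k j := by
          gcongr with k hk
          · exact hw n k
          · exact ih k (Finset.mem_Ico.1 hk).2 (Finset.mem_Ico.1 hk).1
      _ = b n 0 + ∑' j, ∑ k ∈ Finset.Ico 1 n, w n k * b k j := by
          rw [Summable.tsum_finsetSum fun k hk => (hbk k hk).mul_left _]
          simp_rw [tsum_mul_left]
      _ ≤ b n 0 + ∑' j, b n (j + 1) :=
          add_le_add le_rfl (Summable.tsum_le_tsum (hstep n hn)
            (summable_sum fun k hk => (hbk k hk).mul_left _)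
            ((summable_nat_add_iff 1).2 (hb n hn)))
      _ = ∑' j, b n j := ((hb n hn).tsum_eq_zero_add).symm

theorem discrete_fractional_gronwall_integral_general (α h M0 M1 M2 : ℝ)
    (hα : 0 < α) (hα1 : α < 1) (hh : 0 < h)
    (hM0 : 0 ≤ M0) (hM1 : 0 ≤ M1) (hM2 : 0 ≤ M2)
    (y : ℕ → ℝ) (hy0 : y 0 = 0)
    (hrec : ∀ n : ℕ, 1 ≤ n →
      y n ≤ M0 * ((n : ℝ) * h) ^ (α - 1) +
        M1 * h ^ α * ∑ k ∈ Finset.range n, ((n - k : ℕ) : ℝ) ^ (α - 1) * y k + M2) :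
    ∀ n : ℕ, 1 ≤ n →
      y n ≤ M0 * Real.Gamma α * ((n : ℝ) * h) ^ (α - 1) *
          mittagLeffler α α (M1 * Real.Gamma α * ((n : ℝ) * h) ^ α) +
        M2 * mittagLeffler α 1 (M1 * Real.Gamma α * ((n : ℝ) * h) ^ α) := by
  intro n hn
  have htn : ∀ n : ℕ, 0 < n → 0 < (n : ℝ) * h := fun n hn => by positivity
  rw [← (hasSum_gronwallTerm hα (htn n hn) M0 M2 _).tsum_eq]
  refine le_tsum_of_le_add_sum_Ico (w := fun n k => M1 * h ^ α * ((n - k : ℕ) : ℝ) ^ (α - 1))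
    (fun n k => mul_nonneg (mul_nonneg hM1 (rpow_nonneg hh.le _))
      (rpow_nonneg (Nat.cast_nonneg _) _))
    (fun n hn => (hasSum_gronwallTerm hα (htn n hn) M0 M2 _).summable) (fun n hn => ?_)
    (fun n hn j => ?_) hn
  · have := hrec n hn
    rw [Finset.range_eq_Ico, Finset.sum_eq_sum_Ico_succ_bot hn, hy0, mul_zero, zero_add,
      Finset.mul_sum] at this
    simpa only [gronwallTerm_zero hα, mul_assoc, add_right_comm] using this
  · simpa only [Finset.mul_sum, mul_assoc] using gronwallTerm_step hα hα1 hh hM0 hM1 hM2 hn j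

/-- Discrete fractional Grönwall inequality (integral version): if a nonnegative sequence
`y` with `y^0 = 0` satisfies `y^n ≤ M₀ t_n^{α−1} + M₁ h^α ∑_{k=0}^{n−1} (n−k)^{α−1} y^k + M₂`
for all `n ≥ 1`, where `t_n = n h`, then
`y^n ≤ M₀ Γ(α) t_n^{α−1} E_{α,α}(M₁ Γ(α) t_n^α) + M₂ E_α(M₁ Γ(α) t_n^α)`. -/
theorem discrete_fractional_gronwall_integral (α h T M0 M1 M2 : ℝ)
    (hα : 0 < α) (hα1 : α < 1) (hh : 0 < h) (hT : 0 < T)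
    (hM0 : 0 ≤ M0) (hM1 : 0 ≤ M1) (hM2 : 0 ≤ M2)
    (y : ℕ → ℝ) (hy : ∀ n : ℕ, 0 ≤ y n) (hy0 : y 0 = 0)
    (hrec : ∀ n : ℕ, 1 ≤ n →
      y n ≤ M0 * ((n : ℝ) * h) ^ (α - 1) +
        M1 * h ^ α * ∑ k ∈ Finset.range n, ((n - k : ℕ) : ℝ) ^ (α - 1) * y k + M2) :
    ∀ n : ℕ, 1 ≤ n →
      y n ≤ M0 * Real.Gamma α * ((n : ℝ) * h) ^ (α - 1) *
          mittagLeffler α α (M1 * Real.Gamma α * ((n : ℝ) * h) ^ α) +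
        M2 * mittagLeffler α 1 (M1 * Real.Gamma α * ((n : ℝ) * h) ^ α) :=
  discrete_fractional_gronwall_integral_general α h M0 M1 M2 hα hα1 hh hM0 hM1 hM2 y hy0 hrec
end

section
/- Let (y^j)_{j≥0} and (G^j)_{j≥0} be sequences of nonnegative real numbers with y^0 = 0. Let w : ℕ → ℝ satisfy w_0 > 0 and w_j < 0 for all j ≥ 1, and let b : ℕ → ℝ be the convolution-inverse weights, i.e. ∑_{i=0}^{m} w_i b_{m−i} = 1 if m = 0 and ∑_{i=0}^{m} w_i b_{m−i} = 0 for every m ≥ 1. If ∑_{j=0}^{n} w_{n−j} y^j ≤ G^n for every n ≥ 1, then y^n ≤ ∑_{j=1}^{n} b_{n−j} G^j for every n ≥ 1. -/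
/-!
Let `S := b ∗ G'`, where `G'` is `G` with its zeroth term replaced by `0` (so that
`S 0 = 0 = y 0`). Since `b` is the convolution inverse of `w`, `w ∗ S = G'`, so `S` turns the
hypothesis into an equality, and `y ≤ S` is a comparison principle for the lower-triangular
Toeplitz system with matrix `w`: its diagonal `w 0` is positive and its off-diagonal entries are
nonpositive, so `y ≤ S` propagates by strong induction, the step at `n` reading
`w 0 * y n ≤ G n - ∑_{j<n} w (n-j) y j ≤ G n - ∑_{j<n} w (n-j) S j = w 0 * S n`.
-/

open Finset PowerSeries

theorem sum_range_succ_mul_sub_eq_coeff_mul {R : Type*} [CommSemiring R] (u v : ℕ → R) (n : ℕ) :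
    ∑ j ∈ range (n + 1), u (n - j) * v j = coeff n (mk u * mk v) := by
  rw [mul_comm, coeff_mul, Nat.sum_antidiagonal_eq_sum_range_succ_mk]
  simp only [coeff_mk, mul_comm]

theorem mk_mul_mk_eq_one {R : Type*} [CommSemiring R] {u v : ℕ → R} (h0 : u 0 * v 0 = 1)
    (hm : ∀ m, 1 ≤ m → ∑ i ∈ range (m + 1), u i * v (m - i) = 0) : mk u * mk v = 1 := by
  ext m
  rw [coeff_mul, Nat.sum_antidiagonal_eq_sum_range_succ_mk, coeff_one]
  simp only [coeff_mk]
  rcases Nat.eq_zero_or_pos m with rfl | hm_pos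
  · simpa using h0
  · rw [hm m hm_pos, if_neg hm_pos.ne']

theorem le_of_sum_range_succ_mul_sub_le {R : Type*} [CommRing R] [LinearOrder R]
    [IsStrictOrderedRing R] {w y z : ℕ → R} (hw0 : 0 < w 0) (hw : ∀ j, 1 ≤ j → w j ≤ 0)
    (h : ∀ n, ∑ j ∈ range (n + 1), w (n - j) * y j ≤ ∑ j ∈ range (n + 1), w (n - j) * z j)
    (n : ℕ) : y n ≤ z n := by
  induction n using Nat.strong_induction_on with
  | _ n ih =>
    have hpast : ∑ j ∈ range n, w (n - j) * z j ≤ ∑ j ∈ range n, w (n - j) * y j :=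
      sum_le_sum fun j hj =>
        mul_le_mul_of_nonpos_left (ih j (mem_range.1 hj)) (hw _ (by grind))
    have hn := h n
    rw [sum_range_succ, sum_range_succ, Nat.sub_self] at hn
    exact le_of_mul_le_mul_left (by linarith) hw0

theorem sum_range_succ_mul_ite_eq_sum_Icc {R : Type*} [NonUnitalNonAssocSemiring R]
    (f g : ℕ → R) (n : ℕ) :
    ∑ j ∈ range (n + 1), f j * (if j = 0 then 0 else g j) = ∑ j ∈ Icc 1 n, f j * g j := by
  have hIcc : Icc 1 n = (range (n + 1)).filter (· ≠ 0) := by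
    ext j
    simp only [mem_Icc, mem_filter, mem_range]
    omega
  rw [hIcc, sum_filter]
  exact sum_congr rfl fun j _ => by split_ifs <;> simp_all

theorem cq_caputo_integrated_general (y G : ℕ → ℝ)
    (hy0 : y 0 = 0)
    (w b : ℕ → ℝ) (hw0 : 0 < w 0) (hwneg : ∀ j : ℕ, 1 ≤ j → w j < 0)
    (hb0 : w 0 * b 0 = 1)
    (hbm : ∀ m : ℕ, 1 ≤ m → ∑ i ∈ Finset.range (m + 1), w i * b (m - i) = 0)
    (hineq : ∀ n : ℕ, 1 ≤ n → ∑ j ∈ Finset.range (n + 1), w (n - j) * y j ≤ G n) :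
    ∀ n : ℕ, 1 ≤ n → y n ≤ ∑ j ∈ Finset.Icc 1 n, b (n - j) * G j := by
  set G' : ℕ → ℝ := fun j => if j = 0 then 0 else G j
  set S : ℕ → ℝ := fun n => ∑ j ∈ range (n + 1), b (n - j) * G' j
  have hS : mk S = mk b * mk G' := by
    ext m
    rw [coeff_mk, ← sum_range_succ_mul_sub_eq_coeff_mul]
  have hwS (n : ℕ) : ∑ j ∈ range (n + 1), w (n - j) * S j = G' n := by
    rw [sum_range_succ_mul_sub_eq_coeff_mul, hS, ← mul_assoc, mk_mul_mk_eq_one hb0 hbm, one_mul,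
      coeff_mk]
  have hyS : ∀ n, y n ≤ S n := le_of_sum_range_succ_mul_sub_le hw0 (fun j hj => (hwneg j hj).le)
    fun n => by
      rw [hwS]
      rcases n with _ | n
      · simp [hy0, G']
      · exact hineq _ n.succ_pos
  intro n _
  simpa only [S, G', sum_range_succ_mul_ite_eq_sum_Icc] using hyS n

/-- An inequality for the discrete Caputo derivative can be "integrated": if the CQ weights
`w` satisfy `w_0 > 0`, `w_j < 0` for `j ≥ 1`, `b` is their convolution inverse, and the
nonnegative sequences `y`, `G` with `y^0 = 0` satisfy `∑_{j=0}^{n} w_{n−j} y^j ≤ G^n` for all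
`n ≥ 1`, then `y^n ≤ ∑_{j=1}^{n} b_{n−j} G^j` for all `n ≥ 1`. -/
theorem cq_caputo_integrated (y G : ℕ → ℝ)
    (hy : ∀ j : ℕ, 0 ≤ y j) (hG : ∀ j : ℕ, 0 ≤ G j) (hy0 : y 0 = 0)
    (w b : ℕ → ℝ) (hw0 : 0 < w 0) (hwneg : ∀ j : ℕ, 1 ≤ j → w j < 0)
    (hb0 : w 0 * b 0 = 1)
    (hbm : ∀ m : ℕ, 1 ≤ m → ∑ i ∈ Finset.range (m + 1), w i * b (m - i) = 0)
    (hineq : ∀ n : ℕ, 1 ≤ n → ∑ j ∈ Finset.range (n + 1), w (n - j) * y j ≤ G n) :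
    ∀ n : ℕ, 1 ≤ n → y n ≤ ∑ j ∈ Finset.Icc 1 n, b (n - j) * G j :=
  cq_caputo_integrated_general y G hy0 w b hw0 hwneg hb0 hbm hineq
end

section
/- Let 0 < α < 1. There exists a constant C > 0 depending only on α such that for every integer n ≥ 2: ∑_{j=0}^{n−1} (n−j)^{α−1} (j+1)^{−1} ≤ C n^{α−1} log n. -/
/-!
By partial fractions, `1/((n-j)(j+1)) = (1/(n-j) + 1/(j+1))/(n+1)`, so writing
`(n-j)^(α-1) = (n-j)^α/(n-j)` and bounding `(n-j)^α ≤ n^α` turns the sum into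
two copies of the harmonic number `H_n`, scaled by `n^α/(n+1) ≤ n^(α-1)`.
Then `H_n ≤ 1 + log n ≤ (1 + 1/log 2) log n` for `n ≥ 2`.
-/

open Finset

lemma Real.rpow_sub_one_mul_inv_eq {a b : ℝ} (ha : 0 < a) (hb : 0 < b) (α : ℝ) :
    a ^ (α - 1) * b⁻¹ = a ^ α / (a + b) * (a⁻¹ + b⁻¹) := by
  rw [Real.rpow_sub_one ha.ne']
  field_simp
  ring

lemma sum_range_inv_add_one_eq_harmonic (n : ℕ) :
    ∑ j ∈ range n, ((j : ℝ) + 1)⁻¹ = harmonic n := by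
  simp [harmonic]

lemma sum_range_inv_sub_eq_harmonic (n : ℕ) :
    ∑ j ∈ range n, ((n - j : ℕ) : ℝ)⁻¹ = harmonic n := by
  rw [← sum_range_inv_add_one_eq_harmonic, ← sum_range_reflect (fun j => ((j : ℝ) + 1)⁻¹)]
  refine sum_congr rfl fun j hj => ?_
  rw [mem_range] at hj
  rw [← Nat.cast_add_one, Nat.sub_sub]
  congr 3
  omega

lemma harmonic_le_mul_log {n : ℕ} (hn : 2 ≤ n) :
    (harmonic n : ℝ) ≤ (1 + (Real.log 2)⁻¹) * Real.log n := by
  have hlog2 : 0 < Real.log 2 := Real.log_pos one_lt_two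
  have hlog : Real.log 2 ≤ Real.log n := Real.log_le_log two_pos (by exact_mod_cast hn)
  have : 1 ≤ (Real.log 2)⁻¹ * Real.log n := by
    rw [inv_mul_eq_div, one_le_div hlog2]; exact hlog
  linarith [harmonic_le_one_add_log n]

lemma sum_rpow_sub_mul_inv_le_harmonic {α : ℝ} (hα : 0 ≤ α) (n : ℕ) :
    ∑ j ∈ range n, ((n - j : ℕ) : ℝ) ^ (α - 1) * ((j : ℝ) + 1)⁻¹ ≤
      2 * (n : ℝ) ^ (α - 1) * harmonic n := by
  rcases Nat.eq_zero_or_pos n with rfl | hn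
  · simp
  have hn' : (0 : ℝ) < n := by exact_mod_cast hn
  have hfactor : (n : ℝ) ^ α / (n + 1) ≤ (n : ℝ) ^ (α - 1) := by
    rw [Real.rpow_sub_one hn'.ne']
    exact div_le_div_of_nonneg_left (by positivity) hn' (by linarith)
  calc ∑ j ∈ range n, ((n - j : ℕ) : ℝ) ^ (α - 1) * ((j : ℝ) + 1)⁻¹
      = ∑ j ∈ range n,
          ((n - j : ℕ) : ℝ) ^ α / (n + 1) * (((n - j : ℕ) : ℝ)⁻¹ + ((j : ℝ) + 1)⁻¹) := by
        refine sum_congr rfl fun j hj => ?_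
        rw [mem_range] at hj
        rw [Real.rpow_sub_one_mul_inv_eq (by simpa using hj) (by positivity)]
        congr 2
        push_cast [hj.le]
        ring
    _ ≤ ∑ j ∈ range n, (n : ℝ) ^ α / (n + 1) * (((n - j : ℕ) : ℝ)⁻¹ + ((j : ℝ) + 1)⁻¹) := by
        refine sum_le_sum fun j _ => ?_
        gcongr
        exact_mod_cast Nat.sub_le n j
    _ = 2 * ((n : ℝ) ^ α / (n + 1)) * harmonic n := by
        rw [← mul_sum, sum_add_distrib, sum_range_inv_sub_eq_harmonic,
          sum_range_inv_add_one_eq_harmonic]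
        ring
    _ ≤ 2 * (n : ℝ) ^ (α - 1) * harmonic n := by
        have : (0 : ℝ) < harmonic n := by exact_mod_cast harmonic_pos hn.ne'
        gcongr

theorem discrete_frac_integral_bdf1_general (α : ℝ) (hα : 0 < α) :
    ∃ C : ℝ, 0 < C ∧ ∀ n : ℕ, 2 ≤ n →
      ∑ j ∈ Finset.range n, ((n - j : ℕ) : ℝ) ^ (α - 1) * ((j : ℝ) + 1)⁻¹ ≤
        C * (n : ℝ) ^ (α - 1) * Real.log n := by
  refine ⟨2 * (1 + (Real.log 2)⁻¹), by positivity, fun n hn => ?_⟩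
  calc _ ≤ 2 * (n : ℝ) ^ (α - 1) * harmonic n := sum_rpow_sub_mul_inv_le_harmonic hα.le n
    _ ≤ 2 * (n : ℝ) ^ (α - 1) * ((1 + (Real.log 2)⁻¹) * Real.log n) := by
        gcongr; exact harmonic_le_mul_log hn
    _ = _ := by ring

/-- Discrete fractional integral bound for the BDF1-CQ truncation error: for `0 < α < 1`
there is `C > 0` (depending only on `α`) such that
`∑_{j=0}^{n−1} (n−j)^{α−1} (j+1)^{−1} ≤ C n^{α−1} log n` for all `n ≥ 2`. -/
theorem discrete_frac_integral_bdf1 (α : ℝ) (hα : 0 < α) (hα1 : α < 1) :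
    ∃ C : ℝ, 0 < C ∧ ∀ n : ℕ, 2 ≤ n →
      ∑ j ∈ Finset.range n, ((n - j : ℕ) : ℝ) ^ (α - 1) * ((j : ℝ) + 1)⁻¹ ≤
        C * (n : ℝ) ^ (α - 1) * Real.log n :=
  discrete_frac_integral_bdf1_general α hα
end

section
/- Let 0 < α < 1. There exists a constant C > 0 depending only on α such that for every integer n ≥ 1: ∑_{j=0}^{n−1} (n−j)^{α−1} (j+1)^{−α−1} ≤ C n^{α−1}. -/
/-!
Split each term according to whether `n - j ≥ n / 2` or `j + 1 ≥ n / 2`. In the first case the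
factor `(n - j)^(α-1)` is at most `(n/2)^(α-1)` and what remains is a partial sum of the
convergent series `∑ (j+1)^(-α-1)`; in the second the factor `(j+1)^(-α-1)` is at most
`(n/2)^(-α-1)` and what remains is `∑_{k ≤ n} k^(α-1) ≤ n^α / α`, obtained by telescoping
Bernoulli's inequality `α x^(α-1) ≤ x^α - (x-1)^α`. Both pieces are `O(n^(α-1))`.
-/

open Finset Real

theorem mul_rpow_sub_one_le_rpow_sub_rpow {α x : ℝ} (hα0 : 0 ≤ α) (hα1 : α ≤ 1)
    (hx : 1 ≤ x) : α * x ^ (α - 1) ≤ x ^ α - (x - 1) ^ α := by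
  have hx0 : 0 < x := by linarith
  have bernoulli : (1 + -x⁻¹) ^ α ≤ 1 + α * -x⁻¹ :=
    rpow_one_add_le_one_add_mul_self (by simpa using inv_le_one_of_one_le₀ hx) hα0 hα1
  have hfactor : (x - 1) ^ α = x ^ α * (1 + -x⁻¹) ^ α := by
    rw [← mul_rpow hx0.le (by simpa using inv_le_one_of_one_le₀ hx)]
    field_simp
    ring_nf
  rw [hfactor, rpow_sub_one hx0.ne']
  have := mul_le_mul_of_nonneg_left bernoulli (rpow_nonneg hx0.le α)
  linarith [show x ^ α * (1 + α * -x⁻¹) = x ^ α - α * (x ^ α / x) by ring]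

theorem sum_range_add_one_rpow_sub_one_le {α : ℝ} (hα0 : 0 < α) (hα1 : α ≤ 1) (n : ℕ) :
    ∑ j ∈ range n, ((j : ℝ) + 1) ^ (α - 1) ≤ (n : ℝ) ^ α / α := by
  rw [le_div_iff₀' hα0, mul_sum]
  calc ∑ j ∈ range n, α * ((j : ℝ) + 1) ^ (α - 1)
      ≤ ∑ j ∈ range n, ((((j + 1 : ℕ) : ℝ)) ^ α - (j : ℝ) ^ α) :=
        sum_le_sum fun j _ => by
          simpa using mul_rpow_sub_one_le_rpow_sub_rpow hα0.le hα1
            (le_add_of_nonneg_left (Nat.cast_nonneg (α := ℝ) j))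
    _ = (n : ℝ) ^ α := by
        rw [sum_range_sub (fun k : ℕ => (k : ℝ) ^ α)]
        simp [zero_rpow hα0.ne']

theorem Finset.sum_range_tsub_eq_sum_range_add_one {M : Type*} [AddCommMonoid M] (f : ℕ → M)
    (n : ℕ) : ∑ j ∈ range n, f (n - j) = ∑ j ∈ range n, f (j + 1) := by
  rw [← sum_range_reflect]
  exact sum_congr rfl fun j hj => congrArg f (by have := mem_range.mp hj; omega)

theorem rpow_mul_rpow_le_of_two_mul_le_add {x y m p q : ℝ} (hm : 0 < m) (hx : 0 ≤ x)
    (hy : 0 ≤ y) (hxy : 2 * m ≤ x + y) (hp : p ≤ 0) (hq : q ≤ 0) :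
    x ^ p * y ^ q ≤ m ^ p * y ^ q + x ^ p * m ^ q := by
  rcases le_total m x with hmx | hxm
  · have := mul_le_mul_of_nonneg_right (rpow_le_rpow_of_nonpos hm hmx hp) (rpow_nonneg hy q)
    linarith [mul_nonneg (rpow_nonneg hx p) (rpow_nonneg hm.le q)]
  · have := mul_le_mul_of_nonneg_left (rpow_le_rpow_of_nonpos hm (show m ≤ y by linarith) hq)
      (rpow_nonneg hx p)
    linarith [mul_nonneg (rpow_nonneg hm.le p) (rpow_nonneg hy q)]

theorem sum_range_rpow_mul_rpow_le {p q : ℝ} (hp : p ≤ 0) (hq : q ≤ 0) {n : ℕ}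
    (hn : 0 < n) :
    ∑ j ∈ range n, ((n - j : ℕ) : ℝ) ^ p * ((j : ℝ) + 1) ^ q ≤
      ((n : ℝ) / 2) ^ p * ∑ j ∈ range n, ((j : ℝ) + 1) ^ q +
        (∑ j ∈ range n, ((j : ℝ) + 1) ^ p) * ((n : ℝ) / 2) ^ q := by
  have hhalf : (0 : ℝ) < n / 2 := by positivity
  calc ∑ j ∈ range n, ((n - j : ℕ) : ℝ) ^ p * ((j : ℝ) + 1) ^ q
      ≤ ∑ j ∈ range n, (((n : ℝ) / 2) ^ p * ((j : ℝ) + 1) ^ q +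
          ((n - j : ℕ) : ℝ) ^ p * ((n : ℝ) / 2) ^ q) :=
        sum_le_sum fun j hj => rpow_mul_rpow_le_of_two_mul_le_add hhalf (Nat.cast_nonneg _)
          (by positivity) (by rw [Nat.cast_sub (mem_range.mp hj).le]; linarith) hp hq
    _ = _ := by
        rw [sum_add_distrib, ← mul_sum, ← sum_mul,
          sum_range_tsub_eq_sum_range_add_one (fun k : ℕ => (k : ℝ) ^ p)]
        push_cast
        rfl

theorem div_two_rpow {x : ℝ} (hx : 0 ≤ x) (p : ℝ) : (x / 2) ^ p = 2 ^ (-p) * x ^ p := by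
  rw [div_rpow hx zero_le_two, rpow_neg zero_le_two]
  ring

/-- Discrete fractional integral bound for the BDF(p)-CQ truncation error with `p ≥ 2`:
for `0 < α < 1` there is `C > 0` (depending only on `α`) such that
`∑_{j=0}^{n−1} (n−j)^{α−1} (j+1)^{−α−1} ≤ C n^{α−1}` for all `n ≥ 1`. -/
theorem discrete_frac_integral_bdf2 (α : ℝ) (hα : 0 < α) (hα1 : α < 1) :
    ∃ C : ℝ, 0 < C ∧ ∀ n : ℕ, 1 ≤ n →
      ∑ j ∈ Finset.range n, ((n - j : ℕ) : ℝ) ^ (α - 1) * ((j : ℝ) + 1) ^ (-α - 1) ≤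
        C * (n : ℝ) ^ (α - 1) := by
  set T := ∑' j : ℕ, ((j : ℝ) + 1) ^ (-α - 1)
  have hsummable : Summable fun j : ℕ => ((j : ℝ) + 1) ^ (-α - 1) := by
    simpa using (summable_nat_add_iff 1).mpr (summable_nat_rpow.mpr (by linarith : -α - 1 < -1))
  have hT : 0 ≤ T := tsum_nonneg fun j => rpow_nonneg (by positivity) _
  refine ⟨2 ^ (1 - α) * T + 2 ^ (α + 1) / α, by positivity, fun n hn => ?_⟩
  have hn1 : (1 : ℝ) ≤ n := by exact_mod_cast hn
  have hn0 : (0 : ℝ) < n := by linarith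
  have hpow : (n : ℝ) ^ α * (n : ℝ) ^ (-α - 1) =
      (n : ℝ) ^ (-α) * (n : ℝ) ^ (α - 1) := by
    rw [← rpow_add hn0, ← rpow_add hn0]
    ring_nf
  calc _ ≤ ((n : ℝ) / 2) ^ (α - 1) * ∑ j ∈ range n, ((j : ℝ) + 1) ^ (-α - 1) +
          (∑ j ∈ range n, ((j : ℝ) + 1) ^ (α - 1)) * ((n : ℝ) / 2) ^ (-α - 1) :=
        sum_range_rpow_mul_rpow_le (by linarith) (by linarith) hn
    _ ≤ ((n : ℝ) / 2) ^ (α - 1) * T + (n : ℝ) ^ α / α * ((n : ℝ) / 2) ^ (-α - 1) := by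
        gcongr
        · exact hsummable.sum_le_tsum _ fun j _ => rpow_nonneg (by positivity) _
        · exact sum_range_add_one_rpow_sub_one_le hα hα1.le n
    _ = (2 ^ (1 - α) * T + 2 ^ (α + 1) / α * (n : ℝ) ^ (-α)) * (n : ℝ) ^ (α - 1) := by
        rw [div_two_rpow hn0.le, div_two_rpow hn0.le, neg_sub, neg_sub', sub_neg_eq_add, neg_neg]
        linear_combination 2 ^ (α + 1) / α * hpow
    _ ≤ (2 ^ (1 - α) * T + 2 ^ (α + 1) / α) * (n : ℝ) ^ (α - 1) := by
        gcongr
        exact mul_le_of_le_one_right (by positivity)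
          (rpow_le_one_of_one_le_of_nonpos hn1 (by linarith))
end

section
/- Let α = 1/2. There exists a constant C > 0 such that for every integer n ≥ 2: ∑_{j=0}^{n−1} (n−j)^{−1/2} (j+1)^{−1} ≤ C n^{−1/2} log n. -/
/-!
Since `(n - j) + (j + 1) = n + 1`, in every term one of the two factors has its base at least
`n / 2`. Bounding that factor by its value at `n / 2` splits the sum into `(n/2)^(-1/2)` times
the harmonic sum `∑ 1/(j+1) ≤ 1 + log n`, plus `2/n` times `∑_{k ≤ n} k^(-1/2) ≤ 2 √n`.
Both parts are `O(n^(-1/2) log n)`.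
-/

open Finset Real

theorem rpow_neg_mul_rpow_neg_le {x y s p q : ℝ} (hx : 0 < x) (hy : 0 < y) (hs : 0 < s)
    (hsxy : s ≤ x + y) (hp : 0 ≤ p) (hq : 0 ≤ q) :
    x ^ (-p) * y ^ (-q) ≤ (s / 2) ^ (-p) * y ^ (-q) + (s / 2) ^ (-q) * x ^ (-p) := by
  rcases le_total (s / 2) x with hsx | hxs
  · have hx' : x ^ (-p) ≤ (s / 2) ^ (-p) :=
      rpow_le_rpow_of_nonpos (by positivity) hsx (by linarith)
    calc x ^ (-p) * y ^ (-q) ≤ (s / 2) ^ (-p) * y ^ (-q) := by gcongr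
      _ ≤ _ := le_add_of_nonneg_right (by positivity)
  · have hy' : y ^ (-q) ≤ (s / 2) ^ (-q) :=
      rpow_le_rpow_of_nonpos (by positivity) (by linarith) (by linarith)
    calc x ^ (-p) * y ^ (-q) ≤ (s / 2) ^ (-q) * x ^ (-p) := by rw [mul_comm]; gcongr
      _ ≤ _ := le_add_of_nonneg_left (by positivity)

theorem one_sub_mul_add_one_rpow_neg_le {x p : ℝ} (hx : 0 ≤ x) (hp0 : 0 ≤ p) (hp1 : p ≤ 1) :
    (1 - p) * (x + 1) ^ (-p) ≤ (x + 1) ^ (1 - p) - x ^ (1 - p) := by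
  have hx1 : 0 < x + 1 := by linarith
  -- concavity of `t ↦ t ^ (1 - p)`, in the form of weighted AM-GM between `x` and `x + 1`
  have amgm : x ^ (1 - p) * (x + 1) ^ p ≤ x + p := by
    have := geom_mean_le_arith_mean2_weighted (w₁ := 1 - p) (w₂ := p) (by linarith) hp0 hx hx1.le
      (by ring)
    linarith
  have hcancel : (x + 1) ^ p * (x + 1) ^ (-p) = 1 := by
    rw [rpow_neg hx1.le, mul_inv_cancel₀ (rpow_pos_of_pos hx1 p).ne']
  have hsplit : (x + 1) ^ (1 - p) = (x + 1) * (x + 1) ^ (-p) := by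
    rw [sub_eq_add_neg, rpow_add hx1, rpow_one]
  have : x ^ (1 - p) ≤ (x + p) * (x + 1) ^ (-p) := by
    calc x ^ (1 - p) = x ^ (1 - p) * (x + 1) ^ p * (x + 1) ^ (-p) := by
          rw [mul_assoc, hcancel, mul_one]
      _ ≤ (x + p) * (x + 1) ^ (-p) := by gcongr
  rw [hsplit]
  linarith

theorem sum_range_add_one_rpow_neg_le {p : ℝ} (hp0 : 0 ≤ p) (hp1 : p < 1) (n : ℕ) :
    ∑ k ∈ range n, ((k : ℝ) + 1) ^ (-p) ≤ (n : ℝ) ^ (1 - p) / (1 - p) := by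
  have hp : 0 < 1 - p := by linarith
  have htele : ∑ k ∈ range n, (((k + 1 : ℕ) : ℝ) ^ (1 - p) - (k : ℝ) ^ (1 - p)) =
      (n : ℝ) ^ (1 - p) := by
    rw [sum_range_sub (fun k : ℕ ↦ (k : ℝ) ^ (1 - p)), Nat.cast_zero, zero_rpow hp.ne', sub_zero]
  rw [le_div_iff₀ hp, ← htele, sum_mul]
  gcongr with k
  push_cast
  linarith [one_sub_mul_add_one_rpow_neg_le k.cast_nonneg hp0 hp1.le]

theorem sum_range_inv_add_one_le_one_add_log (n : ℕ) :
    ∑ j ∈ range n, ((j : ℝ) + 1)⁻¹ ≤ 1 + log n := by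
  simpa [harmonic] using harmonic_le_one_add_log n

theorem sum_range_sub_rpow_neg_mul_inv_le {p : ℝ} (hp0 : 0 ≤ p) (hp1 : p < 1) {n : ℕ}
    (hn : 0 < n) :
    ∑ j ∈ range n, ((n - j : ℕ) : ℝ) ^ (-p) * ((j : ℝ) + 1)⁻¹ ≤
      (n : ℝ) ^ (-p) * (2 ^ p * (1 + log n) + 2 / (1 - p)) := by
  have hn' : (0 : ℝ) < n := by exact_mod_cast hn
  have hterm : ∀ j ∈ range n, ((n - j : ℕ) : ℝ) ^ (-p) * ((j : ℝ) + 1)⁻¹ ≤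
      (n / 2 : ℝ) ^ (-p) * ((j : ℝ) + 1)⁻¹ + 2 / n * ((n - j : ℕ) : ℝ) ^ (-p) := by
    intro j hj
    have hjn := mem_range.1 hj
    have hsum : ((n - j : ℕ) : ℝ) + ((j : ℝ) + 1) = n + 1 := by
      rw [Nat.cast_sub hjn.le]; ring
    have h := rpow_neg_mul_rpow_neg_le (x := ((n - j : ℕ) : ℝ)) (y := (j : ℝ) + 1) (s := n)
      (q := 1) (by exact_mod_cast Nat.sub_pos_of_lt hjn) (by positivity) hn' (by linarith) hp0
      zero_le_one
    rwa [rpow_neg_one, rpow_neg_one, inv_div] at h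
  have hreflect :
      ∑ j ∈ range n, ((n - j : ℕ) : ℝ) ^ (-p) = ∑ k ∈ range n, ((k : ℝ) + 1) ^ (-p) := by
    rw [← sum_range_reflect]
    refine sum_congr rfl fun j hj ↦ ?_
    rw [show n - (n - 1 - j) = j + 1 by have := mem_range.1 hj; omega]
    push_cast
    rfl
  calc ∑ j ∈ range n, ((n - j : ℕ) : ℝ) ^ (-p) * ((j : ℝ) + 1)⁻¹
      ≤ (n / 2 : ℝ) ^ (-p) * ∑ j ∈ range n, ((j : ℝ) + 1)⁻¹
          + 2 / n * ∑ j ∈ range n, ((n - j : ℕ) : ℝ) ^ (-p) := by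
        rw [mul_sum, mul_sum, ← sum_add_distrib]
        exact sum_le_sum hterm
    _ ≤ (n / 2 : ℝ) ^ (-p) * (1 + log n) + 2 / n * ((n : ℝ) ^ (1 - p) / (1 - p)) := by
        rw [hreflect]
        gcongr
        · exact sum_range_inv_add_one_le_one_add_log n
        · exact sum_range_add_one_rpow_neg_le hp0 hp1 n
    _ = (n : ℝ) ^ (-p) * (2 ^ p * (1 + log n) + 2 / (1 - p)) := by
        rw [div_rpow hn'.le zero_le_two, rpow_neg zero_le_two, sub_eq_add_neg, rpow_add hn',
          rpow_one]
        field_simp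

/-- Borderline case `α = 1/2`: there is `C > 0` such that
`∑_{j=0}^{n−1} (n−j)^{−1/2} (j+1)^{−1} ≤ C n^{−1/2} log n` for every `n ≥ 2`. -/
theorem discrete_frac_integral_sq_half (α : ℝ) (hα : α = 1 / 2) :
    ∃ C : ℝ, 0 < C ∧ ∀ n : ℕ, 2 ≤ n →
      ∑ j ∈ Finset.range n, ((n - j : ℕ) : ℝ) ^ (α - 1) * ((j : ℝ) + 1)⁻¹ ≤
        C * (n : ℝ) ^ (α - 1) * Real.log n := by
  subst hα
  refine ⟨14, by norm_num, fun n hn ↦ ?_⟩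
  have hlog : 1 / 2 ≤ log n :=
    calc (1 : ℝ) / 2 ≤ log 2 := by linarith [log_two_gt_d9]
      _ ≤ log n := log_le_log two_pos (by exact_mod_cast hn)
  have hsqrt2 : (2 : ℝ) ^ (1 / 2 : ℝ) ≤ 2 := by
    simpa using rpow_le_rpow_of_exponent_le one_le_two (by norm_num : (1 / 2 : ℝ) ≤ 1)
  rw [show (1 : ℝ) / 2 - 1 = -(1 / 2) by norm_num]
  calc _ ≤ (n : ℝ) ^ (-(1 / 2) : ℝ) * (2 ^ (1 / 2 : ℝ) * (1 + log n) + 2 / (1 - 1 / 2)) :=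
        sum_range_sub_rpow_neg_mul_inv_le (by norm_num) (by norm_num) (by omega)
    _ ≤ (n : ℝ) ^ (-(1 / 2) : ℝ) * (14 * log n) := by gcongr; nlinarith
    _ = 14 * (n : ℝ) ^ (-(1 / 2) : ℝ) * log n := by ring
end
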